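/- arXiv:2005.14425 — 9 statements merged into one kernel-verified Lean document; each statement's English description precedes it below -/
import Mathlib

section
/- For all real numbers p and γ with 0 < p < 1 and 0 < γ < 1, we have p·log(p/γ) + 2γ·log(2γ/(p+γ)) ≤ 2·d(p‖γ). -/
/-!
Split the inequality as `2γ log (2γ / (p + γ)) + 2 (p - γ) ≤ p log (p / γ)` plus
`γ - p ≤ (1 - p) log ((1 - p) / (1 - γ))`; the latter is `1 - 1/x ≤ log x`.
For the former, bound each logarithm by a rational function, using that for `x ≥ 1`
`2 (x - 1) / (x + 1) ≤ log x ≤ (x - 1/x) / 2` (the logarithmic mean lies between the harmonic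
and the arithmetic mean). When `γ ≤ p` the bounds `2 (x - 1) / (x + 1) ≤ log x ≤ x - 1` cancel
exactly; when `p ≤ γ` the two `(x - 1/x) / 2` bounds leave the remainder
`p (p - γ)² / (2γ (p + γ)) ≥ 0`.
-/

/-- Kullback–Leibler divergence between two Bernoulli distributions with means `p` and `q`. -/
noncomputable def klBer (p q : ℝ) : ℝ :=
  p * Real.log (p / q) + (1 - p) * Real.log ((1 - p) / (1 - q))

namespace Real

variable {a b : ℝ}

theorem two_mul_le_log_one_add_sub_log_one_sub {x : ℝ} (h0 : 0 ≤ x) (h1 : x < 1) :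
    2 * x ≤ log (1 + x) - log (1 - x) := by
  have hs := hasSum_log_sub_log_of_abs_lt_one (abs_lt.2 ⟨by linarith, h1⟩)
  simpa using le_hasSum hs 0 fun k _ => by positivity

theorem two_mul_sub_div_add_le_log_div (hb : 0 < b) (hba : b ≤ a) :
    2 * (a - b) / (a + b) ≤ log (a / b) := by
  have hab : 0 < a + b := by linarith
  have h := two_mul_le_log_one_add_sub_log_one_sub (x := (a - b) / (a + b))
    (div_nonneg (by linarith) hab.le) ((div_lt_one hab).2 (by linarith))
  have ha : 0 < a := hb.trans_le hba
  have one_add : 1 + (a - b) / (a + b) = 2 * a / (a + b) := by field_simp; ring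
  have one_sub : 1 - (a - b) / (a + b) = 2 * b / (a + b) := by field_simp; ring
  rwa [one_add, one_sub, ← log_div (by positivity) (by positivity), mul_div_assoc',
    div_div_div_cancel_right₀ hab.ne', mul_div_mul_left _ _ two_ne_zero] at h

theorem log_div_le_sq_sub_sq_div (hb : 0 < b) (hba : b ≤ a) :
    log (a / b) ≤ (a ^ 2 - b ^ 2) / (2 * a * b) := by
  have ha : 0 < a := hb.trans_le hba
  have h := self_le_sinh_iff.2 (log_nonneg ((one_le_div hb).2 hba))
  rw [sinh_eq, exp_neg, exp_log (by positivity), inv_div] at h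
  convert h using 1
  field_simp

theorem sq_sub_sq_div_le_log_div (ha : 0 < a) (hab : a ≤ b) :
    (a ^ 2 - b ^ 2) / (2 * a * b) ≤ log (a / b) := by
  have h := log_div_le_sq_sub_sq_div ha hab
  rw [← inv_div b a, log_inv]
  have antisymm : (a ^ 2 - b ^ 2) / (2 * a * b) = -((b ^ 2 - a ^ 2) / (2 * b * a)) := by ring
  linarith

theorem sub_le_mul_log_div (ha : 0 < a) (hb : 0 < b) : a - b ≤ a * log (a / b) := by
  have h := mul_le_mul_of_nonneg_left (one_sub_inv_le_log_of_pos (div_pos ha hb)) ha.le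
  rwa [inv_div, mul_sub, mul_one, mul_div_cancel₀ _ ha.ne'] at h

theorem two_mul_sub_add_two_mul_log_le_mul_log_div (ha : 0 < a) (hb : 0 < b) :
    2 * (a - b) + 2 * b * log (2 * b / (a + b)) ≤ a * log (a / b) := by
  have hsum : 0 < a + b := by linarith
  rcases le_total b a with hba | hab
  · have lower := mul_le_mul_of_nonneg_left (two_mul_sub_div_add_le_log_div hb hba) ha.le
    have upper := mul_le_mul_of_nonneg_left
      (log_le_sub_one_of_pos (show 0 < 2 * b / (a + b) by positivity)) (by positivity : 0 ≤ 2 * b)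
    have bounds_eq : a * (2 * (a - b) / (a + b)) - 2 * b * (2 * b / (a + b) - 1) = 2 * (a - b) := by
      field_simp; ring
    linarith
  · have lower := mul_le_mul_of_nonneg_left (sq_sub_sq_div_le_log_div ha hab) ha.le
    have upper := mul_le_mul_of_nonneg_left
      (log_div_le_sq_sub_sq_div hsum (by linarith : a + b ≤ 2 * b)) (by positivity : 0 ≤ 2 * b)
    have slack_eq : a * ((a ^ 2 - b ^ 2) / (2 * a * b))
        - 2 * b * (((2 * b) ^ 2 - (a + b) ^ 2) / (2 * (2 * b) * (a + b))) - 2 * (a - b)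
        = a * (a - b) ^ 2 / (2 * b * (a + b)) := by
      field_simp; ring
    have slack_nonneg : 0 ≤ a * (a - b) ^ 2 / (2 * b * (a + b)) := by positivity
    linarith

end Real

theorem stmt0 (p γ : ℝ) (hp0 : 0 < p) (hp1 : p < 1) (hγ0 : 0 < γ) (hγ1 : γ < 1) :
    p * Real.log (p / γ) + 2 * γ * Real.log (2 * γ / (p + γ)) ≤ 2 * klBer p γ := by
  have head := Real.two_mul_sub_add_two_mul_log_le_mul_log_div hp0 hγ0
  have tail := Real.sub_le_mul_log_div (sub_pos.2 hp1) (sub_pos.2 hγ1)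
  unfold klBer
  linarith
end

section
/- For all real numbers x and y with 0 < x < y < 1, there exists a unique z with x < z < y such that d(z‖x) = d(z‖y). -/
open Real

theorem klBer_self (p : ℝ) : klBer p p = 0 := by
  simp [klBer]

lemma sub_lt_mul_log_div {p q : ℝ} (hp : 0 < p) (hq : 0 < q) (hpq : p ≠ q) :
    p - q < p * log (p / q) := by
  have h := log_lt_sub_one_of_pos (div_pos hq hp) (div_ne_one_of_ne hpq.symm)
  rw [log_div hq.ne' hp.ne'] at h
  rw [log_div hp.ne' hq.ne']
  have hscaled := mul_lt_mul_of_pos_left h hp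
  rw [mul_sub_one, mul_div_cancel₀ _ hp.ne'] at hscaled
  linarith

theorem klBer_pos {p q : ℝ} (hp0 : 0 < p) (hp1 : p < 1) (hq0 : 0 < q) (hq1 : q < 1)
    (hpq : p ≠ q) : 0 < klBer p q := by
  have h₀ := sub_lt_mul_log_div hp0 hq0 hpq
  have h₁ := sub_lt_mul_log_div (sub_pos.2 hp1) (sub_pos.2 hq1) (by contrapose! hpq; linarith)
  unfold klBer
  linarith

lemma mul_log_div_sub_mul_log_div (z : ℝ) {x y : ℝ} (hx : x ≠ 0) (hy : y ≠ 0) :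
    z * log (z / x) - z * log (z / y) = z * log (y / x) := by
  rcases eq_or_ne z 0 with rfl | hz
  · simp
  · rw [log_div hz hx, log_div hz hy, log_div hy hx]
    ring

theorem klBer_sub_klBer (z : ℝ) {x y : ℝ} (hx0 : x ≠ 0) (hy0 : y ≠ 0) (hx1 : x ≠ 1)
    (hy1 : y ≠ 1) :
    klBer z x - klBer z y = z * log (y / x) + (1 - z) * log ((1 - y) / (1 - x)) := by
  rw [← mul_log_div_sub_mul_log_div z hx0 hy0,
    ← mul_log_div_sub_mul_log_div (1 - z) (sub_ne_zero.2 hx1.symm) (sub_ne_zero.2 hy1.symm)]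
  unfold klBer
  ring

lemma existsUnique_add_mul_eq_zero {a b x y : ℝ} (hx : a + b * x < 0) (hy : 0 < a + b * y)
    (hxy : x < y) :
    ∃! z, x < z ∧ z < y ∧ a + b * z = 0 := by
  have hb : 0 < b := by nlinarith
  refine ⟨-a / b, ⟨?_, ?_, by field_simp; ring⟩, fun z ⟨_, _, hz⟩ => ?_⟩
  · rw [lt_div_iff₀ hb]; linarith
  · rw [div_lt_iff₀ hb]; linarith
  · field_simp; linarith

theorem stmt1 (x y : ℝ) (hx : 0 < x) (hxy : x < y) (hy : y < 1) :
    ∃! z : ℝ, x < z ∧ z < y ∧ klBer z x = klBer z y := by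
  have hy0 : 0 < y := hx.trans hxy
  have hx1 : x < 1 := hxy.trans hy
  set A := log (y / x)
  set B := log ((1 - y) / (1 - x))
  have affine : ∀ z, klBer z x - klBer z y = B + (A - B) * z := fun z => by
    rw [klBer_sub_klBer z hx.ne' hy0.ne' hx1.ne hy.ne]
    ring
  have at_x : B + (A - B) * x < 0 := by
    rw [← affine, klBer_self, zero_sub, neg_lt_zero]
    exact klBer_pos hx hx1 hy0 hy hxy.ne
  have at_y : 0 < B + (A - B) * y := by
    rw [← affine, klBer_self, sub_zero]
    exact klBer_pos hy0 hy hx hx1 hxy.ne'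
  simpa only [← sub_eq_zero (a := klBer _ x), affine] using
    existsUnique_add_mul_eq_zero at_x at_y hxy
end

section
/- For all real numbers x and y with 0 < x < y < 1, the Chernoff information satisfies min{ d((x+y)/2‖x), d((x+y)/2‖y) } ≤ d*(x,y) ≤ max{ d((x+y)/2‖x), d((x+y)/2‖y) }. -/
open Real Set

lemma klBer_one_sub_one_sub (p q : ℝ) : klBer (1 - p) (1 - q) = klBer p q := by
  simp only [klBer, sub_sub_cancel]
  ring

lemma hasDerivAt_klBer_left {p q : ℝ} (hp : 0 < p) (hp1 : p < 1) (hq : 0 < q) (hq1 : q < 1) :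
    HasDerivAt (fun p ↦ klBer p q) (log (p / q) - log ((1 - p) / (1 - q))) p := by
  have hpq : p / q ≠ 0 := by positivity
  have hp' : 1 - p ≠ 0 := sub_ne_zero.2 hp1.ne'
  have hq' : 1 - q ≠ 0 := sub_ne_zero.2 hq1.ne'
  have hpq' : (1 - p) / (1 - q) ≠ 0 := div_ne_zero hp' hq'
  have h1 : HasDerivAt (fun p ↦ p * log (p / q)) (log (p / q) + 1) p :=
    ((hasDerivAt_id' p).fun_mul (((hasDerivAt_id' p).div_const q).log hpq)).congr_deriv
      (by field_simp)
  have h2 : HasDerivAt (fun p ↦ (1 - p) * log ((1 - p) / (1 - q)))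
      (-log ((1 - p) / (1 - q)) - 1) p :=
    (((hasDerivAt_id' p).const_sub 1).fun_mul
      ((((hasDerivAt_id' p).const_sub 1).div_const (1 - q)).log hpq')).congr_deriv
      (by field_simp; ring)
  exact (h1.fun_add h2).congr_deriv (by ring)

lemma klBer_monotoneOn_left {q : ℝ} (hq : 0 < q) (hq1 : q < 1) :
    MonotoneOn (fun p ↦ klBer p q) (Ico q 1) := by
  have hderiv : ∀ p ∈ Ico q 1, HasDerivAt (fun p ↦ klBer p q)
      (log (p / q) - log ((1 - p) / (1 - q))) p :=
    fun p hp ↦ hasDerivAt_klBer_left (hq.trans_le hp.1) hp.2 hq hq1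
  refine monotoneOn_of_hasDerivWithinAt_nonneg (convex_Ico q 1)
    (f' := fun p ↦ log (p / q) - log ((1 - p) / (1 - q)))
    (fun p hp ↦ (hderiv p hp).continuousAt.continuousWithinAt)
    (fun p hp ↦ (hderiv p (interior_subset hp)).hasDerivWithinAt) ?_
  intro p hp
  rw [interior_Ico] at hp
  obtain ⟨hqp, hp1⟩ := hp
  have h1 : 0 ≤ log (p / q) := log_nonneg ((one_le_div hq).2 hqp.le)
  have h2 : log ((1 - p) / (1 - q)) ≤ 0 :=
    log_nonpos (div_nonneg (by linarith) (by linarith)) ((div_le_one (by linarith)).2 (by linarith))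
  linarith

lemma klBer_antitoneOn_left {q : ℝ} (hq : 0 < q) (hq1 : q < 1) :
    AntitoneOn (fun p ↦ klBer p q) (Ioc 0 q) := by
  rintro a ⟨ha0, haq⟩ b ⟨hb0, hbq⟩ hab
  simp only [← klBer_one_sub_one_sub _ q]
  exact klBer_monotoneOn_left (by linarith) (by linarith)
    ⟨by linarith, by linarith⟩ ⟨by linarith, by linarith⟩ (by linarith)

/-- For `0 < x < y < 1`, the Chernoff information `d*(x,y)` equals `d(z‖x)` where `z` is the
unique point strictly between `x` and `y` with `d(z‖x) = d(z‖y)`.  The statement asserts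
`min{d((x+y)/2‖x), d((x+y)/2‖y)} ≤ d*(x,y) ≤ max{d((x+y)/2‖x), d((x+y)/2‖y)}`. -/
theorem stmt2 (x y : ℝ) (hx : 0 < x) (hxy : x < y) (hy : y < 1)
    (z : ℝ) (hz1 : x < z) (hz2 : z < y) (hz : klBer z x = klBer z y) :
    min (klBer ((x + y) / 2) x) (klBer ((x + y) / 2) y) ≤ klBer z x ∧
      klBer z x ≤ max (klBer ((x + y) / 2) x) (klBer ((x + y) / 2) y) := by
  have hxm : x < (x + y) / 2 := by linarith
  have hmy : (x + y) / 2 < y := by linarith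
  set m := (x + y) / 2
  have hx1 : x < 1 := hxy.trans hy
  have hy0 : 0 < y := hx.trans hxy
  rcases le_total z m with hzm | hmz
  · have hzx : klBer z x ≤ klBer m x :=
      klBer_monotoneOn_left hx hx1 ⟨hz1.le, by linarith⟩ ⟨hxm.le, by linarith⟩ hzm
    have hzy : klBer m y ≤ klBer z y :=
      klBer_antitoneOn_left hy0 hy ⟨hx.trans hz1, hz2.le⟩ ⟨by linarith, hmy.le⟩ hzm
    exact ⟨(min_le_right _ _).trans (hz ▸ hzy), hzx.trans (le_max_left _ _)⟩
  · have hzx : klBer m x ≤ klBer z x :=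
      klBer_monotoneOn_left hx hx1 ⟨hxm.le, by linarith⟩ ⟨hz1.le, by linarith⟩ hmz
    have hzy : klBer z y ≤ klBer m y :=
      klBer_antitoneOn_left hy0 hy ⟨by linarith, hmy.le⟩ ⟨hx.trans hz1, hz2.le⟩ hmz
    exact ⟨(min_le_left _ _).trans hzx, (hz ▸ hzy).trans (le_max_right _ _)⟩
end

section
/- Let a > 0 and b ∈ ℝ with b > log a. Then for every real number t ≥ e·(b − log a)/((e−1)·a), one has a·t ≥ b + log t. Consequently, every t > 0 satisfying a·t < b + log t must satisfy t < e·(b − log a)/((e−1)·a). -/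
/-!
Applying `log y ≤ y - 1` at `y = a t / e` gives `log t ≤ a t / e - log a`. So
`b + log t ≤ (b - log a) + a t / e`, and the threshold on `t` is exactly the condition
`b - log a ≤ (1 - 1/e) a t` that makes the right-hand side at most `a t`.
-/

open Real

theorem Real.log_le_div_exp_one {x : ℝ} (hx : 0 < x) : log x ≤ x / exp 1 := by
  have h := log_le_sub_one_of_pos (div_pos hx (exp_pos 1))
  rw [log_div hx.ne' (exp_pos 1).ne', log_exp] at h
  linarith

theorem Real.add_log_le_mul {a b t : ℝ} (ha : 0 < a) (ht : 0 < t)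
    (h : exp 1 * (b - log a) ≤ t * ((exp 1 - 1) * a)) : b + log t ≤ a * t := by
  have hlog : log a + log t ≤ a * t / exp 1 := by
    rw [← log_mul ha.ne' ht.ne']
    exact log_le_div_exp_one (mul_pos ha ht)
  have hgap : b - log a ≤ a * t - a * t / exp 1 := by
    have hsplit : t * ((exp 1 - 1) * a) / exp 1 = a * t - a * t / exp 1 := by
      field_simp
    rw [← hsplit, le_div_iff₀' (exp_pos 1)]
    exact h
  linarith

theorem stmt6 (a b : ℝ) (ha : 0 < a) (hb : Real.log a < b) :
    (∀ t : ℝ, Real.exp 1 * (b - Real.log a) / ((Real.exp 1 - 1) * a) ≤ t →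
        b + Real.log t ≤ a * t) ∧
    (∀ t : ℝ, 0 < t → a * t < b + Real.log t →
        t < Real.exp 1 * (b - Real.log a) / ((Real.exp 1 - 1) * a)) := by
  have hden : 0 < (exp 1 - 1) * a := mul_pos (sub_pos.2 (one_lt_exp_iff.2 one_pos)) ha
  have hthreshold : 0 < exp 1 * (b - log a) / ((exp 1 - 1) * a) :=
    div_pos (mul_pos (exp_pos 1) (sub_pos.2 hb)) hden
  have hbound : ∀ t, exp 1 * (b - log a) / ((exp 1 - 1) * a) ≤ t → b + log t ≤ a * t :=
    fun t ht => add_log_le_mul ha (hthreshold.trans_le ht) ((div_le_iff₀ hden).1 ht)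
  exact ⟨hbound, fun t _ hlt => not_le.1 fun ht => hlt.not_ge (hbound t ht)⟩
end

section
/- Let 0 ≤ q < p < 1. Then the function s ↦ (1−p−s)·log((1−p−s)/(1−q−s)) is strictly increasing on the interval [0, 1−p). -/
/-! With `t = (a - s) / (b - s)`, the derivative of `(a - s) * log t` is `t - 1 - log t`.
For `s < a < b` we have `0 < t < 1`, and `log t < t - 1` for every positive `t ≠ 1`. -/

open Real Set

lemma hasDerivAt_sub_mul_log_div_sub {a b x : ℝ} (hxa : x ≠ a) (hxb : x ≠ b) :
    HasDerivAt (fun s : ℝ => (a - s) * log ((a - s) / (b - s)))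
      ((a - x) / (b - x) - 1 - log ((a - x) / (b - x))) x := by
  have ha : a - x ≠ 0 := sub_ne_zero.mpr hxa.symm
  have hb : b - x ≠ 0 := sub_ne_zero.mpr hxb.symm
  have hsub : ∀ c : ℝ, HasDerivAt (fun s : ℝ => c - s) (-1) x := fun c => by
    simpa using (hasDerivAt_id x).const_sub c
  have hlog := ((hsub a).div (hsub b) hb).log (div_ne_zero ha hb)
  refine ((hsub a).mul hlog).congr_deriv ?_
  simp only [Pi.div_apply]
  field_simp
  ring

lemma strictMonoOn_sub_mul_log_div_sub {a b : ℝ} (hab : a < b) :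
    StrictMonoOn (fun s : ℝ => (a - s) * log ((a - s) / (b - s))) (Iio a) := by
  have hderiv : ∀ x ∈ Iio a, HasDerivAt (fun s : ℝ => (a - s) * log ((a - s) / (b - s)))
      ((a - x) / (b - x) - 1 - log ((a - x) / (b - x))) x := fun x hx =>
    hasDerivAt_sub_mul_log_div_sub (ne_of_lt hx) (ne_of_lt (hx.trans hab))
  refine strictMonoOn_of_hasDerivWithinAt_pos
    (f' := fun x => (a - x) / (b - x) - 1 - log ((a - x) / (b - x))) (convex_Iio a)
    (fun x hx => (hderiv x hx).continuousAt.continuousWithinAt) ?_ ?_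
  · rw [interior_Iio]
    exact fun x hx => (hderiv x hx).hasDerivWithinAt
  · rw [interior_Iio]
    intro x hx
    have hb : 0 < b - x := by linarith [mem_Iio.mp hx]
    have ht_pos : 0 < (a - x) / (b - x) := div_pos (sub_pos.mpr hx) hb
    have ht_lt_one : (a - x) / (b - x) < 1 := (div_lt_one hb).mpr (by linarith)
    linarith [log_lt_sub_one_of_pos ht_pos ht_lt_one.ne]

theorem stmt11_general (p q : ℝ) (hqp : q < p) :
    StrictMonoOn (fun s : ℝ => (1 - p - s) * Real.log ((1 - p - s) / (1 - q - s)))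
      (Set.Ico 0 (1 - p)) :=
  (strictMonoOn_sub_mul_log_div_sub (by linarith : 1 - p < 1 - q)).mono Ico_subset_Iio_self

theorem stmt11 (p q : ℝ) (hq : 0 ≤ q) (hqp : q < p) (hp : p < 1) :
    StrictMonoOn (fun s : ℝ => (1 - p - s) * Real.log ((1 - p - s) / (1 - q - s)))
      (Set.Ico 0 (1 - p)) :=
  stmt11_general p q hqp
end

section
/- Let α be a nonzero real number. Then the function x ↦ x·log(x/(x−α)) is strictly decreasing on the interval (max(α,0), ∞). -/
/-! With `t = x / (x - α)` the derivative is `log t + 1 - t`, which is negative because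
`log t < t - 1` for `0 < t ≠ 1`, and `t ≠ 1` exactly because `α ≠ 0`. -/

open Real Set

lemma hasDerivAt_mul_log_div_sub {α x : ℝ} (hx : x ≠ 0) (hxα : x - α ≠ 0) :
    HasDerivAt (fun x : ℝ => x * log (x / (x - α)))
      (log (x / (x - α)) + 1 - x / (x - α)) x := by
  have hquot : HasDerivAt (fun x : ℝ => x / (x - α)) ((1 * (x - α) - x * 1) / (x - α) ^ 2) x :=
    (hasDerivAt_id x).div ((hasDerivAt_id x).sub_const α) hxα
  refine ((hasDerivAt_id' x).mul (hquot.log (div_ne_zero hx hxα))).congr_deriv ?_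
  field_simp
  ring

lemma div_sub_ne_one {α x : ℝ} (hα : α ≠ 0) (hxα : x - α ≠ 0) : x / (x - α) ≠ 1 := by
  rw [Ne, div_eq_one_iff_eq hxα]
  intro h
  exact hα (by linarith)

theorem stmt12 (α : ℝ) (hα : α ≠ 0) :
    StrictAntiOn (fun x : ℝ => x * Real.log (x / (x - α))) (Set.Ioi (max α 0)) := by
  have hpos : ∀ x ∈ Ioi (max α 0), 0 < x ∧ 0 < x - α := fun x hx =>
    ⟨(le_max_right α 0).trans_lt hx, sub_pos.2 ((le_max_left α 0).trans_lt hx)⟩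
  have hderiv : ∀ x ∈ Ioi (max α 0), HasDerivAt (fun x : ℝ => x * log (x / (x - α)))
      (log (x / (x - α)) + 1 - x / (x - α)) x := fun x hx =>
    hasDerivAt_mul_log_div_sub (hpos x hx).1.ne' (hpos x hx).2.ne'
  refine strictAntiOn_of_hasDerivWithinAt_neg (f' := fun x => log (x / (x - α)) + 1 - x / (x - α))
    (convex_Ioi _) (fun x hx => (hderiv x hx).continuousAt.continuousWithinAt) ?_ ?_
  · rw [interior_Ioi]
    exact fun x hx => (hderiv x hx).hasDerivWithinAt
  · rw [interior_Ioi]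
    intro x hx
    obtain ⟨hx0, hxα⟩ := hpos x hx
    linarith [log_lt_sub_one_of_pos (div_pos hx0 hxα) (div_sub_ne_one hα hxα.ne')]
end

section
/- Let p, γ ∈ (0,1) and let s ≥ 0 satisfy p + s + 2γ < 1. Then p·log(p/γ) + (1−p−s)·log((1−p−s)/(1−γ−s)) ≤ 2·d(p‖γ). -/
/-!
Write the second summand as `u * log (u / (u + δ))` with `u = 1 - p - s` and `δ = p - γ`. This
is antitone in `u` (its derivative is `log y + 1 - y ≤ 0` for `y = u / (u + δ)`), and
`u > 2γ`, so it is at most `2γ log (2γ / (p + γ))`. It remains to show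
`p log (p / γ) + 2γ log (2γ / (p + γ)) ≤ 2 d(p‖γ)`: the difference of the two sides is a convex
function of `p` on `(0, 1)` that vanishes together with its derivative at `p = γ`.
-/

open Real Set

lemma hasDerivAt_mul_log_div_add (δ : ℝ) {x : ℝ} (hx : 0 < x) (hxδ : 0 < x + δ) :
    HasDerivAt (fun x => x * log (x / (x + δ))) (log (x / (x + δ)) + δ / (x + δ)) x :=
  ((hasDerivAt_id' x).fun_mul (((hasDerivAt_id' x).fun_div ((hasDerivAt_id' x).add_const δ)
    hxδ.ne').log (div_pos hx hxδ).ne')).congr_deriv (by field_simp; ring)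

lemma antitoneOn_mul_log_div_add (δ : ℝ) :
    AntitoneOn (fun x => x * log (x / (x + δ))) (Ioi (max 0 (-δ))) := by
  have hdom : ∀ x ∈ Ioi (max 0 (-δ)), 0 < x ∧ 0 < x + δ := fun x hx => by
    rw [mem_Ioi, max_lt_iff] at hx
    exact ⟨hx.1, by linarith [hx.2]⟩
  have hderiv := fun x hx => hasDerivAt_mul_log_div_add δ (hdom x hx).1 (hdom x hx).2
  refine antitoneOn_of_deriv_nonpos (convex_Ioi _)
    (fun x hx => (hderiv x hx).continuousAt.continuousWithinAt)
    (fun x hx => (hderiv x (interior_subset hx)).differentiableAt.differentiableWithinAt)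
    fun x hx => ?_
  rw [interior_Ioi] at hx
  obtain ⟨hx0, hxδ⟩ := hdom x hx
  rw [(hderiv x hx).deriv]
  have hlog := log_le_sub_one_of_pos (div_pos hx0 hxδ)
  have : x / (x + δ) - 1 = -(δ / (x + δ)) := by field_simp; ring
  linarith

lemma hasDerivAt_mul_log_div {c x : ℝ} (hc : c ≠ 0) (hx : x ≠ 0) :
    HasDerivAt (fun x => x * log (x / c)) (log (x / c) + 1) x :=
  ((hasDerivAt_id' x).fun_mul (((hasDerivAt_id' x).div_const c).log
    (div_ne_zero hx hc))).congr_deriv (by field_simp)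

lemma hasDerivAt_klBer_left_s13 {p q : ℝ} (hp₀ : p ≠ 0) (hp₁ : p ≠ 1) (hq₀ : q ≠ 0) (hq₁ : q ≠ 1) :
    HasDerivAt (fun x => klBer x q) (log (p / q) - log ((1 - p) / (1 - q))) p := by
  have h := (hasDerivAt_mul_log_div (c := 1 - q) (sub_ne_zero.2 hq₁.symm)
    (sub_ne_zero.2 hp₁.symm)).comp p ((hasDerivAt_id' p).const_sub 1)
  exact ((hasDerivAt_mul_log_div hq₀ hp₀).fun_add h).congr_deriv (by ring)

noncomputable def klGap (γ x : ℝ) : ℝ :=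
  2 * klBer x γ - x * log (x / γ) - 2 * γ * log (2 * γ / (x + γ))

lemma hasDerivAt_klGap {γ x : ℝ} (hγ : γ ∈ Ioo 0 1) (hx : x ∈ Ioo 0 1) :
    HasDerivAt (klGap γ)
      (log (x / γ) - 2 * log ((1 - x) / (1 - γ)) - 1 + 2 * γ / (x + γ)) x := by
  obtain ⟨hγ₀, hγ₁⟩ := hγ
  obtain ⟨hx₀, hx₁⟩ := hx
  have hxγ : 0 < x + γ := by linarith
  have hlog := ((hasDerivAt_const x (2 * γ)).fun_div ((hasDerivAt_id' x).add_const γ)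
    hxγ.ne').log (by positivity)
  exact ((((hasDerivAt_klBer_left_s13 hx₀.ne' hx₁.ne hγ₀.ne' hγ₁.ne).const_mul 2).fun_sub
    (hasDerivAt_mul_log_div hγ₀.ne' hx₀.ne')).fun_sub (hlog.const_mul (2 * γ))).congr_deriv
    (by field_simp; ring)

lemma hasDerivAt_deriv_klGap {γ x : ℝ} (hγ : γ ∈ Ioo 0 1) (hx : x ∈ Ioo 0 1) :
    HasDerivAt (fun x => log (x / γ) - 2 * log ((1 - x) / (1 - γ)) - 1 + 2 * γ / (x + γ))
      (1 / x + 2 / (1 - x) - 2 * γ / (x + γ) ^ 2) x := by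
  obtain ⟨hγ₀, hγ₁⟩ := hγ
  obtain ⟨hx₀, hx₁⟩ := hx
  have hxγ : 0 < x + γ := by linarith
  have h₁ := ((hasDerivAt_id' x).div_const γ).log (by positivity)
  have h₂ := (((hasDerivAt_id' x).const_sub 1).div_const (1 - γ)).log
    (div_pos (sub_pos.2 hx₁) (sub_pos.2 hγ₁)).ne'
  have h₃ := (hasDerivAt_const x (2 * γ)).fun_div ((hasDerivAt_id' x).add_const γ) hxγ.ne'
  have : (1 : ℝ) - x ≠ 0 := by linarith
  have : (1 : ℝ) - γ ≠ 0 := by linarith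
  exact (((h₁.fun_sub (h₂.const_mul 2)).sub_const 1).fun_add h₃).congr_deriv
    (by field_simp; ring)

lemma convexOn_klGap {γ : ℝ} (hγ : γ ∈ Ioo 0 1) : ConvexOn ℝ (Ioo 0 1) (klGap γ) := by
  refine convexOn_of_hasDerivWithinAt2_nonneg (convex_Ioo 0 1)
    (fun x hx => (hasDerivAt_klGap hγ hx).continuousAt.continuousWithinAt)
    (fun x hx => (hasDerivAt_klGap hγ (interior_subset hx)).hasDerivWithinAt)
    (fun x hx => (hasDerivAt_deriv_klGap hγ (interior_subset hx)).hasDerivWithinAt)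
    fun x hx => ?_
  rw [interior_Ioo] at hx
  obtain ⟨hx₀, hx₁⟩ := hx
  have hγx : 2 * γ / (x + γ) ^ 2 ≤ 1 / x := by
    rw [div_le_div_iff₀ (by nlinarith [hγ.1]) hx₀]
    nlinarith [sq_nonneg (x - γ)]
  have : 0 ≤ 2 / (1 - x) := div_nonneg zero_le_two (by linarith)
  linarith

lemma klGap_self {γ : ℝ} (hγ : γ ∈ Ioo 0 1) : klGap γ γ = 0 := by
  have h₀ : γ ≠ 0 := hγ.1.ne'
  have h₁ : 1 - γ ≠ 0 := by linarith [hγ.2]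
  simp [klGap, klBer, ← two_mul, h₀, h₁]

lemma klGap_nonneg {γ x : ℝ} (hγ : γ ∈ Ioo 0 1) (hx : x ∈ Ioo 0 1) : 0 ≤ klGap γ x := by
  have hderiv : derivWithin (klGap γ) (Ioi γ) γ = 0 := by
    rw [(hasDerivAt_klGap hγ hγ).hasDerivWithinAt.derivWithin (uniqueDiffWithinAt_Ioi γ)]
    have h₀ : γ ≠ 0 := hγ.1.ne'
    have h₁ : 1 - γ ≠ 0 := by linarith [hγ.2]
    rw [div_self h₀, div_self h₁, log_one, ← two_mul, div_self (by positivity : 2 * γ ≠ 0)]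
    norm_num
  have hmin := (convexOn_klGap hγ).isMinOn_of_rightDeriv_eq_zero
    (by rwa [interior_Ioo]) hderiv hx
  rwa [klGap_self hγ] at hmin

theorem stmt13_general (p γ s : ℝ) (hp : p ∈ Set.Ioo (0 : ℝ) 1) (hγ : γ ∈ Set.Ioo (0 : ℝ) 1)
    (hlt : p + s + 2 * γ < 1) :
    p * Real.log (p / γ) + (1 - p - s) * Real.log ((1 - p - s) / (1 - γ - s)) ≤
      2 * klBer p γ := by
  have hu : 1 - p - s ∈ Ioi (max 0 (-(p - γ))) := by
    rw [mem_Ioi, max_lt_iff]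
    constructor <;> linarith [hp.1, hγ.1]
  have h2γ : 2 * γ ∈ Ioi (max 0 (-(p - γ))) := by
    rw [mem_Ioi, max_lt_iff]
    constructor <;> linarith [hp.1, hγ.1]
  have hsecond : (1 - p - s) * log ((1 - p - s) / (1 - γ - s)) ≤
      2 * γ * log (2 * γ / (p + γ)) := by
    have key := antitoneOn_mul_log_div_add (p - γ) h2γ hu (by linarith)
    dsimp only at key
    rwa [show 2 * γ + (p - γ) = p + γ by ring, show 1 - p - s + (p - γ) = 1 - γ - s by ring]
      at key
  have hgap := klGap_nonneg hγ hp
  rw [klGap] at hgap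
  linarith

theorem stmt13 (p γ s : ℝ) (hp : p ∈ Set.Ioo (0 : ℝ) 1) (hγ : γ ∈ Set.Ioo (0 : ℝ) 1)
    (hs : 0 ≤ s) (hlt : p + s + 2 * γ < 1) :
    p * Real.log (p / γ) + (1 - p - s) * Real.log ((1 - p - s) / (1 - γ - s)) ≤
      2 * klBer p γ :=
  stmt13_general p γ s hp hγ hlt
end

section
/- Let p_e ∈ (0,1/2), δ ∈ (0,1), and let k ≥ 1 be an integer. Let S₀ be a real number with S₀ ≥ 1 + 33·log(16k/δ)/(1−2p_e)². Let A and B be two disjoint finite sets of vertices (clusters), and let the edge weights between every pair of distinct vertices lying in the same cluster be independent random variables equal to +1 with probability 1−p_e and to −1 with probability p_e. For a subset S of vertices of a cluster define wt(S) = Σ_{i<j, i,j ∈ S} w_{ij}. If s ⊆ A is a fixed subset with |s| ≤ S₀ − 1 and |B| ≥ 2·S₀, then ℙ( wt(s) > wt(B) ) ≤ δ/(16k). -/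
/-!
Writing `Q` for the set of ordered intra-cluster pairs, `wt s` and `wt B` are sums of the
independent `±1` weights over the disjoint edge sets `s ×ˢ s ∩ Q` and `B ×ˢ B ∩ Q`, of sizes
`a ≤ C(|s|, 2)` and `M = C(|B|, 2)`, and every weight has mean `q = 1 - 2 p_e`. By Hoeffding's lemma
the centred sums are independent and sub-Gaussian with variance proxies `M` and `a`, so
`ℙ(wt B ≤ wt s) ≤ exp (-(q (M - a))² / (2 (a + M)))`. Since `|B| ≥ 2 S₀` while `|s| < S₀`, the
gap `M - a` is of order `S₀²`, and the hypothesis on `S₀` makes the exponent at least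
`log (16 k / δ)`.
-/

open MeasureTheory ProbabilityTheory Finset

section Hoeffding

variable {Ω ι : Type*} {mΩ : MeasurableSpace Ω} {μ : Measure Ω} {X : ι → Ω → ℝ}

theorem ProbabilityTheory.iIndepFun.indepFun_finsetSum_finsetSum (hindep : iIndepFun X μ)
    (hmeas : ∀ i, AEMeasurable (X i) μ) {S T : Finset ι} (hST : Disjoint S T) :
    IndepFun (fun ω ↦ ∑ i ∈ S, X i ω) (fun ω ↦ ∑ i ∈ T, X i ω) μ := by
  have h := hindep.indepFun_finset₀ S T hST hmeas
  have hS : Measurable fun v : S → ℝ ↦ ∑ i, v i := by fun_prop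
  have hT : Measurable fun v : T → ℝ ↦ ∑ i, v i := by fun_prop
  convert h.comp hS hT using 1
  · ext ω; exact (sum_coe_sort S fun i ↦ X i ω).symm
  · ext ω; exact (sum_coe_sort T fun i ↦ X i ω).symm

theorem hasSubgaussianMGF_sum_sub_integral [IsProbabilityMeasure μ] (hindep : iIndepFun X μ)
    (hmeas : ∀ i, AEMeasurable (X i) μ) (hbdd : ∀ i, ∀ᵐ ω ∂μ, X i ω ∈ Set.Icc (-1) 1)
    (T : Finset ι) :
    HasSubgaussianMGF (fun ω ↦ ∑ i ∈ T, X i ω - μ[fun ω ↦ ∑ i ∈ T, X i ω]) #T μ := by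
  have hint : ∀ i, Integrable (X i) μ := fun i ↦ Integrable.of_mem_Icc _ _ (hmeas i) (hbdd i)
  have hX : ∀ i ∈ T, HasSubgaussianMGF (fun ω ↦ X i ω - μ[X i]) 1 μ := fun i _ ↦ by
    convert hasSubgaussianMGF_of_mem_Icc (hmeas i) (hbdd i)
    norm_num
  have hcentered : iIndepFun (fun i ω ↦ X i ω - μ[X i]) μ :=
    hindep.comp (fun i x ↦ x - ∫ ω, X i ω ∂μ) fun i ↦ measurable_sub_const _
  convert HasSubgaussianMGF.sum_of_iIndepFun hcentered hX using 1
  · ext ω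
    rw [integral_finsetSum T fun i _ ↦ hint i, sum_sub_distrib]
  · simp

theorem measureReal_sum_le_sum_le_exp [IsProbabilityMeasure μ] (hindep : iIndepFun X μ)
    (hmeas : ∀ i, AEMeasurable (X i) μ) (hbdd : ∀ i, ∀ᵐ ω ∂μ, X i ω ∈ Set.Icc (-1) 1)
    {m : ℝ} (hm : 0 ≤ m) (hmean : ∀ i, μ[X i] = m) {S T : Finset ι} (hST : Disjoint S T)
    (hcard : #S ≤ #T) :
    μ.real {ω | ∑ i ∈ T, X i ω ≤ ∑ i ∈ S, X i ω}
      ≤ Real.exp (-(m * (#T - #S)) ^ 2 / (2 * (#S + #T))) := by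
  have hint : ∀ i, Integrable (X i) μ := fun i ↦ Integrable.of_mem_Icc _ _ (hmeas i) (hbdd i)
  have hsum_mean : ∀ U : Finset ι, μ[fun ω ↦ ∑ i ∈ U, X i ω] = #U * m := fun U ↦ by
    simp [integral_finsetSum U fun i _ ↦ hint i, hmean]
  have h := (hasSubgaussianMGF_sum_sub_integral hindep hmeas hbdd T).measureReal_le_le_exp
    (hasSubgaussianMGF_sum_sub_integral hindep hmeas hbdd S)
    (hindep.indepFun_finsetSum_finsetSum hmeas hST.symm)
    (by rw [hsum_mean, hsum_mean]; gcongr)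
  convert h using 3
  · rw [hsum_mean, hsum_mean]; ring
  · push_cast; ring

end Hoeffding

theorem integral_eq_one_sub_two_mul {Ω : Type*} {mΩ : MeasurableSpace Ω} {μ : Measure Ω}
    [IsProbabilityMeasure μ] {X : Ω → ℝ} (hX : Measurable X) (hval : ∀ ω, X ω = 1 ∨ X ω = -1)
    {p : ℝ} (hp : μ {ω | X ω = 1} = ENNReal.ofReal (1 - p)) (hp1 : p ≤ 1) :
    ∫ ω, X ω ∂μ = 1 - 2 * p := by
  have hS : MeasurableSet {ω | X ω = 1} := hX (measurableSet_singleton 1)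
  have hX_eq : ∀ ω, X ω = 2 * {ω | X ω = 1}.indicator 1 ω - 1 := fun ω ↦ by
    rcases hval ω with h | h <;> norm_num [Set.indicator, h]
  rw [integral_congr_ae (ae_of_all _ hX_eq),
    integral_sub (((integrable_const 1).indicator hS).const_mul 2) (integrable_const 1),
    integral_const_mul, integral_indicator_one hS, measureReal_def, hp,
    ENNReal.toReal_ofReal (by linarith)]
  simp only [integral_const, probReal_univ, smul_eq_mul, one_mul]
  ring

section Pairs

variable {α : Type*} {Q : α × α → Prop} [DecidablePred Q]

theorem sum_ite_mem_and_mem_eq_sum_subtype [DecidableEq α] {M : Type*} [AddCommMonoid M]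
    [Fintype {p // Q p}] (S : Finset α) (f : {p // Q p} → M) :
    ∑ e, (if e.1.1 ∈ S ∧ e.1.2 ∈ S then f e else 0) = ∑ e ∈ (S ×ˢ S).subtype Q, f e := by
  rw [← sum_filter]
  congr 1
  ext e
  simp

theorem disjoint_subtype_product {S T : Finset α} (hST : Disjoint S T) :
    Disjoint ((S ×ˢ S).subtype Q) ((T ×ˢ T).subtype Q) := by
  rw [disjoint_left]
  simp only [mem_subtype, mem_product]
  exact fun _ hS hT ↦ disjoint_left.1 hST hS.1 hT.1

variable [LinearOrder α]

theorem card_subtype_product_le_choose_two (hQ : ∀ p, Q p → p.1 < p.2) (S : Finset α) :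
    #((S ×ˢ S).subtype Q) ≤ (#S).choose 2 := by
  rw [card_subtype, ← card_product_filter_lt]
  exact card_le_card (monotone_filter_right _ fun p _ hp ↦ hQ p hp)

theorem card_subtype_product_eq_choose_two {S : Finset α}
    (hQ : ∀ p ∈ S ×ˢ S, Q p ↔ p.1 < p.2) :
    #((S ×ˢ S).subtype Q) = (#S).choose 2 := by
  rw [card_subtype, ← card_product_filter_lt, filter_congr hQ]

end Pairs

theorem le_hoeffding_exponent_of_card_bounds {q L S₀ n N a : ℝ} (hq : 0 < q) (hL : 0 ≤ L)
    (hS₀ : 1 + 33 * L / q ^ 2 ≤ S₀) (hn0 : 0 ≤ n) (hn : n ≤ S₀ - 1) (hN : 2 * S₀ ≤ N)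
    (ha0 : 0 ≤ a) (ha : a ≤ n * (n - 1) / 2) :
    L ≤ (q * (N * (N - 1) / 2 - a)) ^ 2 / (2 * (a + N * (N - 1) / 2)) := by
  set M := N * (N - 1) / 2
  have hLS₀ : 33 * L ≤ q ^ 2 * (S₀ - 1) := by
    rw [← div_le_iff₀' (by positivity)]
    linarith
  have hS₀1 : 1 ≤ S₀ := by linarith
  have hM : 2 * S₀ ^ 2 - S₀ ≤ M := by simp only [M]; nlinarith
  have h3a : 3 * a ≤ M := by nlinarith
  have hgap : 4 * (S₀ - 1) ≤ 33 * (M - a) := by nlinarith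
  rw [le_div_iff₀ (by nlinarith), mul_pow]
  calc L * (2 * (a + M)) ≤ 4 * L * (M - a) := by nlinarith
    _ ≤ 4 * (q ^ 2 * (S₀ - 1)) / 33 * (M - a) := by gcongr <;> linarith
    _ ≤ q ^ 2 * (M - a) ^ 2 := by
      nlinarith [mul_le_mul_of_nonneg_left hgap
        (mul_nonneg (sq_nonneg q) (by linarith : 0 ≤ M - a))]

theorem stmt16 {Ω : Type*} [MeasureSpace Ω] [IsProbabilityMeasure (ℙ : Measure Ω)]
    (p_e : ℝ) (hpe : p_e ∈ Set.Ioo (0 : ℝ) (1 / 2)) (δ : ℝ) (hδ : δ ∈ Set.Ioo (0 : ℝ) 1)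
    (k : ℕ) (hk : 1 ≤ k)
    (S₀ : ℝ) (hS₀ : 1 + 33 * Real.log (16 * k / δ) / (1 - 2 * p_e) ^ 2 ≤ S₀)
    (V : Type*) [Fintype V] [LinearOrder V] [DecidableEq V]
    (A B : Finset V) (hAB : Disjoint A B)
    -- edge weights on pairs of distinct vertices lying in the same cluster
    (w : {e : V × V // e.1 < e.2 ∧ ((e.1 ∈ A ∧ e.2 ∈ A) ∨ (e.1 ∈ B ∧ e.2 ∈ B))} → Ω → ℝ)
    (hmeas : ∀ e, Measurable (w e))
    (hindep : iIndepFun w)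
    (hval : ∀ e ω, w e ω = 1 ∨ w e ω = -1)
    (hdist : ∀ e, ℙ {ω | w e ω = 1} = ENNReal.ofReal (1 - p_e))
    (wt : Finset V → Ω → ℝ)
    (hwt : ∀ S ω, wt S ω =
        ∑ e : {e : V × V // e.1 < e.2 ∧ ((e.1 ∈ A ∧ e.2 ∈ A) ∨ (e.1 ∈ B ∧ e.2 ∈ B))},
          if e.1.1 ∈ S ∧ e.1.2 ∈ S then w e ω else 0)
    (s : Finset V) (hsA : s ⊆ A) (hscard : (s.card : ℝ) ≤ S₀ - 1)
    (hBcard : 2 * S₀ ≤ (B.card : ℝ)) :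
    ℙ {ω | wt B ω < wt s ω} ≤ ENNReal.ofReal (δ / (16 * k)) := by
  obtain ⟨hpe0, hpe12⟩ := hpe
  obtain ⟨hδ0, hδ1⟩ := hδ
  have hk0 : (1 : ℝ) ≤ k := by exact_mod_cast hk
  simp_rw [hwt, sum_ite_mem_and_mem_eq_sum_subtype]
  let Q : V × V → Prop := fun e ↦ e.1 < e.2 ∧ ((e.1 ∈ A ∧ e.2 ∈ A) ∨ (e.1 ∈ B ∧ e.2 ∈ B))
  have hs : #((s ×ˢ s).subtype Q) ≤ (#s).choose 2 :=
    card_subtype_product_le_choose_two (fun _ hp ↦ hp.1) s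
  have hB : #((B ×ˢ B).subtype Q) = (#B).choose 2 :=
    card_subtype_product_eq_choose_two fun p hp ↦ ⟨And.left, fun h ↦ ⟨h, .inr (mem_product.1 hp)⟩⟩
  have hcard : #((s ×ˢ s).subtype Q) ≤ #((B ×ˢ B).subtype Q) :=
    hB ▸ hs.trans (Nat.choose_le_choose 2 (by exact_mod_cast (by linarith : (#s : ℝ) ≤ #B)))
  have hexp_neg_log : Real.exp (-Real.log (16 * k / δ)) = δ / (16 * k) := by
    rw [Real.exp_neg, Real.exp_log (by positivity), inv_div]
  refine (measure_mono (Set.ofPred_subset_ofPred.2 fun _ ↦ le_of_lt)).trans ?_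
  rw [← ofReal_measureReal]
  refine ENNReal.ofReal_le_ofReal ((measureReal_sum_le_sum_le_exp hindep
    (fun e ↦ (hmeas e).aemeasurable)
    (fun e ↦ ae_of_all _ fun ω ↦ by rcases hval e ω with h | h <;> norm_num [h]) (by linarith)
    (fun e ↦ integral_eq_one_sub_two_mul (hmeas e) (hval e) (hdist e) (by linarith))
    (disjoint_subtype_product (hAB.mono_left hsA)) hcard).trans ?_)
  rw [← hexp_neg_log, Real.exp_le_exp, neg_div, neg_le_neg_iff, hB, Nat.cast_choose_two]
  refine le_hoeffding_exponent_of_card_bounds (by linarith)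
    (Real.log_nonneg ((le_div_iff₀ hδ0).2 (by linarith))) hS₀ (Nat.cast_nonneg _) hscard hBcard
    (Nat.cast_nonneg _) ?_
  rw [← Nat.cast_choose_two]
  exact_mod_cast hs
end

section
/- Let θ > 0 and let n ≥ 2 be an integer with exp(θ·n) ≥ n. Define f(a) = C(n, n−a)·exp(−θ·(2an − a² + a)) for integers a, where C(n, m) denotes the binomial coefficient. Then for every integer a with 1 ≤ a and 2a + 2 ≤ n, one has f(a) ≥ f(a+1); i.e., f is nonincreasing on this range. -/
/-!
Since `f (a + 1) / f a = C(n, a + 1) / C(n, a) · exp(-θ (2n - 2a))` and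
`C(n, a + 1) / C(n, a) = (n - a) / (a + 1) ≤ n ≤ exp(θ n)`, it suffices that `n ≤ 2n - 2a`,
which is exactly `2a ≤ n`.
-/

open Real

theorem Nat.choose_succ_le_mul_choose (n k : ℕ) : n.choose (k + 1) ≤ n * n.choose k :=
  calc n.choose (k + 1) ≤ n.choose (k + 1) * (k + 1) := Nat.le_mul_of_pos_right _ k.succ_pos
    _ = n.choose k * (n - k) := Nat.choose_succ_right_eq n k
    _ ≤ n.choose k * n := Nat.mul_le_mul_left _ (Nat.sub_le n k)
    _ = n * n.choose k := Nat.mul_comm _ _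

theorem mul_exp_neg_le_one_of_le_exp {x θ s t : ℝ} (hθ : 0 ≤ θ) (hst : s ≤ t)
    (hx : x ≤ exp (θ * s)) : x * exp (-θ * t) ≤ 1 := by
  rw [neg_mul, exp_neg, mul_inv_le_iff₀ (exp_pos _), one_mul]
  exact hx.trans (exp_le_exp.mpr (mul_le_mul_of_nonneg_left hst hθ))

theorem stmt18_general (θ : ℝ) (hθ : 0 < θ) (n : ℕ)
    (hexp : (n : ℝ) ≤ Real.exp (θ * n))
    (f : ℕ → ℝ)
    (hf : ∀ a : ℕ, f a = (n.choose (n - a) : ℝ) *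
        Real.exp (-θ * (2 * a * n - (a : ℝ) ^ 2 + a))) :
    ∀ a : ℕ, 1 ≤ a → 2 * a + 2 ≤ n → f (a + 1) ≤ f a := by
  intro a _ h2a
  rw [hf, hf, Nat.choose_symm (by omega), Nat.choose_symm (by omega)]
  have hratio : (n : ℝ) * exp (-θ * (2 * n - 2 * a)) ≤ 1 := by
    refine mul_exp_neg_le_one_of_le_exp hθ.le ?_ hexp
    have : (2 * a : ℝ) ≤ n := by exact_mod_cast (by omega : 2 * a ≤ n)
    linarith
  have hexponent : -θ * (2 * ((a + 1 : ℕ) : ℝ) * n - ((a + 1 : ℕ) : ℝ) ^ 2 + ((a + 1 : ℕ) : ℝ))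
      = -θ * (2 * a * n - (a : ℝ) ^ 2 + a) + -θ * (2 * n - 2 * a) := by
    push_cast; ring
  have hchoose : (n.choose (a + 1) : ℝ) ≤ n * n.choose a := by
    exact_mod_cast Nat.choose_succ_le_mul_choose n a
  rw [hexponent, exp_add]
  set E := exp (-θ * (2 * a * n - (a : ℝ) ^ 2 + a))
  calc (n.choose (a + 1) : ℝ) * (E * exp (-θ * (2 * n - 2 * a)))
      ≤ n * n.choose a * (E * exp (-θ * (2 * n - 2 * a))) := by gcongr
    _ = n * exp (-θ * (2 * n - 2 * a)) * (n.choose a * E) := by ring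
    _ ≤ n.choose a * E := mul_le_of_le_one_left (by positivity) hratio

theorem stmt18 (θ : ℝ) (hθ : 0 < θ) (n : ℕ) (hn : 2 ≤ n)
    (hexp : (n : ℝ) ≤ Real.exp (θ * n))
    (f : ℕ → ℝ)
    (hf : ∀ a : ℕ, f a = (n.choose (n - a) : ℝ) *
        Real.exp (-θ * (2 * a * n - (a : ℝ) ^ 2 + a))) :
    ∀ a : ℕ, 1 ≤ a → 2 * a + 2 ≤ n → f (a + 1) ≤ f a :=
  stmt18_general θ hθ n hexp f hf
end
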